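/- Let d = 3, so L² = 6. Let C = aL + Σ_{i=1}^8 b_iN_i with a ∈ ℤ, a ≥ 1, b_i ∈ (1/2)ℤ, b_i ≤ 0 (intersection form: L² = 6, L·N_i = 0, N_i·N_j = -2δ_{ij}). If C·(L - N̂) ≤ 0 with N̂ = (N_1+...+N_8)/2, then C² < -2. -/

import Mathlib

theorem sq_le_card_mul_sum_sq_of_add_sum_nonpos {ι α : Type*} [Fintype ι] [CommRing α]
    [LinearOrder α] [IsStrictOrderedRing α] {t : α} (f : ι → α) (ht : 0 ≤ t)
    (h : t + ∑ i, f i ≤ 0) : t ^ 2 ≤ Fintype.card ι * ∑ i, f i ^ 2 :=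
  calc t ^ 2 ≤ (-∑ i, f i) ^ 2 := pow_le_pow_left₀ ht (by linarith) 2
    _ = (∑ i, f i) ^ 2 := neg_sq _
    _ ≤ Fintype.card ι * ∑ i, f i ^ 2 := sq_sum_le_card_mul_sum_sq

theorem ample_L_minus_Nhat_d3_general
    (a : ℤ) (ha : 1 ≤ a) (b : Fin 8 → ℚ)
    (hneg : 6 * (a : ℚ) + ∑ i, b i ≤ 0) :
    6 * (a : ℚ) ^ 2 - 2 * ∑ i, (b i) ^ 2 < -2 := by
  have ha' : (1 : ℚ) ≤ a := by exact_mod_cast ha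
  have hsum : (6 * a : ℚ) ^ 2 ≤ 8 * ∑ i, b i ^ 2 := by
    simpa using sq_le_card_mul_sum_sq_of_add_sum_nonpos b (by positivity) hneg
  calc 6 * (a : ℚ) ^ 2 - 2 * ∑ i, b i ^ 2 ≤ -3 * a ^ 2 := by linarith
    _ ≤ -3 := by nlinarith
    _ < -2 := by norm_num

/-- Ampleness computation for `L - N̂` when `L² = 6`: if `C = aL + Σ bᵢNᵢ`
    with `a ∈ ℤ`, `a ≥ 1`, `bᵢ ∈ ½ℤ`, `bᵢ ≤ 0` and `C·(L - N̂) ≤ 0`,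
    then `C² < -2`. -/
theorem ample_L_minus_Nhat_d3
    (a : ℤ) (ha : 1 ≤ a) (b : Fin 8 → ℚ)
    (hb2 : ∀ i, ∃ m : ℤ, b i = (m : ℚ) / 2) (hb : ∀ i, b i ≤ 0)
    (hneg : 6 * (a : ℚ) + ∑ i, b i ≤ 0) :
    6 * (a : ℚ) ^ 2 - 2 * ∑ i, (b i) ^ 2 < -2 :=
  ample_L_minus_Nhat_d3_general a ha b hneg
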